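/- arXiv:1805.01139 — 3 statements merged into one kernel-verified Lean document; each statement's English description precedes it below -/
import Mathlib

section
/- Let X be a nonempty set, let B ⊆ P_∅(X) and let g be a nonnegative gamble on X. If for every nonnegative rational r the set {x ∈ X : g(x) ≥ r} is a finite union of pairwise disjoint events in B ∪ {X, ∅}, then g is B-measurable. -/
open scoped BigOperators

namespace IPaper

variable {X : Type*}

/-- A gamble on `X`: a bounded real-valued function. -/
def IsGamble (f : X → ℝ) : Prop := ∃ M : ℝ, ∀ x, |f x| ≤ M

/-- The indicator gamble of an event. -/
noncomputable def ind (B : Set X) : X → ℝ := Set.indicator B 1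

/-- The set `G_{>0}(X)` of nonnegative nonzero gambles. -/
def Gpos (X : Type*) : Set (X → ℝ) := {f | IsGamble f ∧ 0 ≤ f ∧ f ≠ 0}

/-- A coherent set of desirable gambles. -/
structure CoherentSDG (D : Set (X → ℝ)) : Prop where
  subset_gambles : ∀ f ∈ D, IsGamble f
  d1 : ∀ f : X → ℝ, IsGamble f → 0 ≤ f → f ≠ 0 → f ∈ D
  d2 : ∀ f ∈ D, ∀ l : ℝ, 0 < l → l • f ∈ D
  d3 : ∀ f ∈ D, ∀ g ∈ D, f + g ∈ D
  d4 : ∀ f : X → ℝ, f ≤ 0 → f ∉ D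

/-- `posi A`: positive linear hull of `A`. -/
def posi (A : Set (X → ℝ)) : Set (X → ℝ) :=
  {g | ∃ (n : ℕ) (l : Fin (n + 1) → ℝ) (h : Fin (n + 1) → X → ℝ),
    (∀ i, 0 < l i) ∧ (∀ i, h i ∈ A) ∧ g = ∑ i, l i • h i}

/-- `E(A) := posi (A ∪ G_{>0}(X))`. -/
def natExtSet (A : Set (X → ℝ)) : Set (X → ℝ) := posi (A ∪ Gpos X)

/-- `C(X)`: all pairs of a gamble and a nonempty event. -/
def domC (X : Type*) : Set ((X → ℝ) × Set X) := {p | IsGamble p.1 ∧ p.2.Nonempty}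

/-- The conditional lower prevision `lp_D` derived from a set of gambles `D`. -/
noncomputable def lpOf (D : Set (X → ℝ)) (f : X → ℝ) (B : Set X) : EReal :=
  sSup (Real.toEReal '' {m : ℝ | (fun x => (f x - m) * ind B x) ∈ D})

/-- Coherence (Williams) of a conditional lower prevision on a domain `C`. -/
def Coherent (C : Set ((X → ℝ) × Set X)) (lp : (X → ℝ) → Set X → EReal) : Prop :=
  ∃ D : Set (X → ℝ), CoherentSDG D ∧ ∀ p ∈ C, lp p.1 p.2 = lpOf D p.1 p.2

/-- The set `A_lp`. -/
def Alp (C : Set ((X → ℝ) × Set X)) (lp : (X → ℝ) → Set X → EReal) : Set (X → ℝ) :=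
  {g | ∃ p ∈ C, ∃ m : ℝ, (m : EReal) < lp p.1 p.2 ∧ g = fun x => (p.1 x - m) * ind p.2 x}

/-- `E(lp) := E(A_lp)`. -/
def ElpSet (C : Set ((X → ℝ) × Set X)) (lp : (X → ℝ) → Set X → EReal) : Set (X → ℝ) :=
  natExtSet (Alp C lp)

/-- The natural extension of `lp` to all of `C(X)`. -/
noncomputable def natExtLP (C : Set ((X → ℝ) × Set X)) (lp : (X → ℝ) → Set X → EReal)
    (f : X → ℝ) (B : Set X) : EReal :=
  lpOf (ElpSet C lp) f B

/-- Simple `B`-measurable gamble. -/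
def SimpleMeas (Bfam : Set (Set X)) (g : X → ℝ) : Prop :=
  ∃ (c0 : ℝ) (n : ℕ) (c : Fin n → ℝ) (Bs : Fin n → Set X),
    0 ≤ c0 ∧ (∀ i, 0 ≤ c i) ∧ (∀ i, Bs i ∈ Bfam) ∧
    g = fun x => c0 + ∑ i, c i * ind (Bs i) x

/-- `B`-measurable gamble: uniform limit of nonnegative simple `B`-measurable gambles. -/
def BMeas (Bfam : Set (Set X)) (g : X → ℝ) : Prop :=
  ∃ gs : ℕ → X → ℝ, (∀ n, 0 ≤ gs n ∧ SimpleMeas Bfam (gs n)) ∧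
    TendstoUniformly gs g Filter.atTop

/-- A conditional linear prevision on `C(X)`: a coherent self-conjugate conditional
lower prevision on the full domain. -/
def CondLinPrev (P : (X → ℝ) → Set X → EReal) : Prop :=
  Coherent (domC X) P ∧ ∀ p ∈ domC X, P p.1 p.2 = -P (-p.1) p.2

section Product

variable {X1 X2 : Type*}

/-- `A_{1→2}`. -/
def A12 (D2 : Set (X2 → ℝ)) (F1 : Set (Set X1)) : Set (X1 × X2 → ℝ) :=
  {g | ∃ f2 ∈ D2, ∃ B1 ∈ F1 ∪ {Set.univ}, g = fun p => f2 p.2 * ind B1 p.1}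

/-- `A_{2→1}`. -/
def A21 (D1 : Set (X1 → ℝ)) (F2 : Set (Set X2)) : Set (X1 × X2 → ℝ) :=
  {g | ∃ f1 ∈ D1, ∃ B2 ∈ F2 ∪ {Set.univ}, g = fun p => f1 p.1 * ind B2 p.2}

/-- `D1 ⊗ D2`, relative to the families of conditioning events `F1`, `F2`. -/
def indNatExt (D1 : Set (X1 → ℝ)) (D2 : Set (X2 → ℝ))
    (F1 : Set (Set X1)) (F2 : Set (Set X2)) : Set (X1 × X2 → ℝ) :=
  natExtSet (A12 D2 F1 ∪ A21 D1 F2)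

/-- `marg_1(D)`. -/
def marg1 (D : Set (X1 × X2 → ℝ)) : Set (X1 → ℝ) :=
  {f | IsGamble f ∧ (fun p : X1 × X2 => f p.1) ∈ D}

/-- `marg_2(D)`. -/
def marg2 (D : Set (X1 × X2 → ℝ)) : Set (X2 → ℝ) :=
  {f | IsGamble f ∧ (fun p : X1 × X2 => f p.2) ∈ D}

/-- `marg_1(D|B2)`. -/
def marg1c (D : Set (X1 × X2 → ℝ)) (B2 : Set X2) : Set (X1 → ℝ) :=
  {f | IsGamble f ∧ (fun p : X1 × X2 => f p.1 * ind B2 p.2) ∈ D}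

/-- `marg_2(D|B1)`. -/
def marg2c (D : Set (X1 × X2 → ℝ)) (B1 : Set X1) : Set (X2 → ℝ) :=
  {f | IsGamble f ∧ (fun p : X1 × X2 => f p.2 * ind B1 p.1) ∈ D}

/-- Epistemic independence of a set of desirable gambles on `X1 × X2`. -/
def EpIndSDG (F1 : Set (Set X1)) (F2 : Set (Set X2)) (D : Set (X1 × X2 → ℝ)) : Prop :=
  (∀ B2 ∈ F2, marg1c D B2 = marg1 D) ∧ (∀ B1 ∈ F1, marg2c D B1 = marg2 D)

/-- Independent product (of sets of desirable gambles). -/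
def IndProductSDG (F1 : Set (Set X1)) (F2 : Set (Set X2))
    (D1 : Set (X1 → ℝ)) (D2 : Set (X2 → ℝ)) (D : Set (X1 × X2 → ℝ)) : Prop :=
  CoherentSDG D ∧ EpIndSDG F1 F2 D ∧ marg1 D = D1 ∧ marg2 D = D2

/-- The independent natural extension `lp1 ⊗ lp2` on `C(X1 × X2)`. -/
noncomputable def lpProd (C1 : Set ((X1 → ℝ) × Set X1)) (lp1 : (X1 → ℝ) → Set X1 → EReal)
    (C2 : Set ((X2 → ℝ) × Set X2)) (lp2 : (X2 → ℝ) → Set X2 → EReal)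
    (F1 : Set (Set X1)) (F2 : Set (Set X2)) :
    (X1 × X2 → ℝ) → Set (X1 × X2) → EReal :=
  lpOf (indNatExt (ElpSet C1 lp1) (ElpSet C2 lp2) F1 F2)

/-- An independent domain `C ⊆ C(X1 × X2)`. -/
def IndepDomain (F1 : Set (Set X1)) (F2 : Set (Set X2))
    (C : Set ((X1 × X2 → ℝ) × Set (X1 × X2))) : Prop :=
  (∀ (f1 : X1 → ℝ) (B1 : Set X1), IsGamble f1 → B1.Nonempty → ∀ B2 ∈ F2,
    (((fun p : X1 × X2 => f1 p.1), B1 ×ˢ (Set.univ : Set X2)) ∈ C ↔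
      ((fun p : X1 × X2 => f1 p.1), B1 ×ˢ B2) ∈ C)) ∧
  (∀ (f2 : X2 → ℝ) (B2 : Set X2), IsGamble f2 → B2.Nonempty → ∀ B1 ∈ F1,
    (((fun p : X1 × X2 => f2 p.2), (Set.univ : Set X1) ×ˢ B2) ∈ C ↔
      ((fun p : X1 × X2 => f2 p.2), B1 ×ˢ B2) ∈ C))

/-- Epistemic independence of a conditional lower prevision on a domain `C`. -/
def EpIndLP (F1 : Set (Set X1)) (F2 : Set (Set X2))
    (C : Set ((X1 × X2 → ℝ) × Set (X1 × X2)))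
    (lp : (X1 × X2 → ℝ) → Set (X1 × X2) → EReal) : Prop :=
  (∀ (f1 : X1 → ℝ) (B1 : Set X1), IsGamble f1 → B1.Nonempty →
    ((fun p : X1 × X2 => f1 p.1), B1 ×ˢ (Set.univ : Set X2)) ∈ C → ∀ B2 ∈ F2,
    lp (fun p : X1 × X2 => f1 p.1) (B1 ×ˢ (Set.univ : Set X2)) =
      lp (fun p : X1 × X2 => f1 p.1) (B1 ×ˢ B2)) ∧
  (∀ (f2 : X2 → ℝ) (B2 : Set X2), IsGamble f2 → B2.Nonempty →
    ((fun p : X1 × X2 => f2 p.2), (Set.univ : Set X1) ×ˢ B2) ∈ C → ∀ B1 ∈ F1,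
    lp (fun p : X1 × X2 => f2 p.2) ((Set.univ : Set X1) ×ˢ B2) =
      lp (fun p : X1 × X2 => f2 p.2) (B1 ×ˢ B2))

/-- Independent product of two conditional lower previsions, on the joint domain `C`. -/
def IndProductLP (F1 : Set (Set X1)) (F2 : Set (Set X2))
    (C1 : Set ((X1 → ℝ) × Set X1)) (lp1 : (X1 → ℝ) → Set X1 → EReal)
    (C2 : Set ((X2 → ℝ) × Set X2)) (lp2 : (X2 → ℝ) → Set X2 → EReal)
    (C : Set ((X1 × X2 → ℝ) × Set (X1 × X2)))
    (lp : (X1 × X2 → ℝ) → Set (X1 × X2) → EReal) : Prop :=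
  Coherent C lp ∧ EpIndLP F1 F2 C lp ∧
  (∀ p ∈ C1, lp (fun q : X1 × X2 => p.1 q.1) (p.2 ×ˢ (Set.univ : Set X2)) = lp1 p.1 p.2) ∧
  (∀ p ∈ C2, lp (fun q : X1 × X2 => p.1 q.2) ((Set.univ : Set X1) ×ˢ p.2) = lp2 p.1 p.2)

end Product

/-!
The dyadic approximations `⌊2ⁿ g⌋ / 2ⁿ` converge uniformly to `g`, and for `K ≥ 2ⁿ sup g` each
equals `2⁻ⁿ ∑_{k < K} 1_{g ≥ (k+1)/2ⁿ}`, a nonnegative combination of indicators of superlevel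
sets at rational levels. By hypothesis each such set is a finite disjoint union of events in
`B ∪ {X, ∅}`, so its indicator is the sum of their indicators, a simple `B`-measurable gamble.
-/

open Finset

section SimpleMeas

variable {Bfam : Set (Set X)}

lemma ind_nonneg (B : Set X) : 0 ≤ ind B :=
  Set.indicator_nonneg fun _ _ => zero_le_one

lemma ind_iUnion_of_pairwise_disjoint {ι : Type*} [Fintype ι] {Bs : ι → Set X}
    (hdisj : Pairwise fun i j => Disjoint (Bs i) (Bs j)) :
    ind (⋃ i, Bs i) = ∑ i, ind (Bs i) := by
  ext x
  simpa [ind] using indicator_biUnion_apply univ Bs (hdisj.set_pairwise _) (f := 1) x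

lemma SimpleMeas.nonneg {g : X → ℝ} (hg : SimpleMeas Bfam g) : 0 ≤ g := by
  obtain ⟨c0, n, c, Bs, hc0, hc, -, rfl⟩ := hg
  exact fun x => add_nonneg hc0 (sum_nonneg fun i _ => mul_nonneg (hc i) (ind_nonneg _ x))

lemma SimpleMeas.zero : SimpleMeas Bfam 0 :=
  ⟨0, 0, Fin.elim0, Fin.elim0, le_rfl, (·.elim0), (·.elim0), by ext; simp⟩

lemma SimpleMeas.add {f g : X → ℝ} (hf : SimpleMeas Bfam f) (hg : SimpleMeas Bfam g) :
    SimpleMeas Bfam (f + g) := by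
  obtain ⟨c0, n, c, Bs, hc0, hc, hB, rfl⟩ := hf
  obtain ⟨d0, m, d, Cs, hd0, hd, hC, rfl⟩ := hg
  refine ⟨c0 + d0, n + m, Fin.append c d, Fin.append Bs Cs, add_nonneg hc0 hd0,
    Fin.addCases (by simpa using hc) (by simpa using hd),
    Fin.addCases (by simpa using hB) (by simpa using hC), ?_⟩
  ext x
  simp only [Pi.add_apply, Fin.sum_univ_add, Fin.append_left, Fin.append_right]
  ring

lemma SimpleMeas.sum {ι : Type*} (s : Finset ι) {f : ι → X → ℝ}
    (hf : ∀ i ∈ s, SimpleMeas Bfam (f i)) : SimpleMeas Bfam (∑ i ∈ s, f i) :=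
  sum_induction f _ (fun _ _ => SimpleMeas.add) SimpleMeas.zero hf

lemma SimpleMeas.smul {g : X → ℝ} (hg : SimpleMeas Bfam g) {a : ℝ} (ha : 0 ≤ a) :
    SimpleMeas Bfam (a • g) := by
  obtain ⟨c0, n, c, Bs, hc0, hc, hB, rfl⟩ := hg
  refine ⟨a * c0, n, fun i => a * c i, Bs, mul_nonneg ha hc0, fun i => mul_nonneg ha (hc i),
    hB, ?_⟩
  ext x
  simp only [Pi.smul_apply, smul_eq_mul, mul_add, mul_sum, mul_assoc]

lemma simpleMeas_ind {B : Set X} (hB : B ∈ Bfam ∪ {Set.univ, ∅}) : SimpleMeas Bfam (ind B) := by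
  rcases hB with hB | rfl | rfl
  · exact ⟨0, 1, fun _ => 1, fun _ => B, le_rfl, fun _ => zero_le_one, fun _ => hB,
      by ext; simp⟩
  · exact ⟨1, 0, Fin.elim0, Fin.elim0, zero_le_one, (·.elim0), (·.elim0), by ext; simp [ind]⟩
  · rw [ind, Set.indicator_empty]; exact SimpleMeas.zero

lemma simpleMeas_ind_iUnion {n : ℕ} {Bs : Fin n → Set X} (hB : ∀ i, Bs i ∈ Bfam ∪ {Set.univ, ∅})
    (hdisj : Pairwise fun i j => Disjoint (Bs i) (Bs j)) : SimpleMeas Bfam (ind (⋃ i, Bs i)) :=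
  ind_iUnion_of_pairwise_disjoint hdisj ▸ SimpleMeas.sum univ fun i _ => simpleMeas_ind (hB i)

end SimpleMeas

lemma filter_range_succ_le_eq_range_floor {t : ℝ} (ht : 0 ≤ t) {K : ℕ} (hK : ⌊t⌋₊ ≤ K) :
    {k ∈ range K | ((k : ℕ) : ℝ) + 1 ≤ t} = range ⌊t⌋₊ := by
  ext k
  have : k + 1 ≤ ⌊t⌋₊ ↔ (k : ℝ) + 1 ≤ t := mod_cast Nat.le_floor_iff ht
  simp only [mem_filter, mem_range, ← this]
  omega

noncomputable def dyadicApprox (g : X → ℝ) (n : ℕ) (x : X) : ℝ := ⌊2 ^ n * g x⌋₊ / 2 ^ n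

lemma abs_sub_dyadicApprox_le {g : X → ℝ} (hg0 : 0 ≤ g) (n : ℕ) (x : X) :
    |g x - dyadicApprox g n x| ≤ (2 ^ n)⁻¹ := by
  have h2n : (0 : ℝ) < 2 ^ n := by positivity
  have hle := Nat.floor_le (mul_nonneg h2n.le (hg0 x))
  have hlt := Nat.lt_floor_add_one (2 ^ n * g x)
  have hdiff : g x - dyadicApprox g n x = (2 ^ n * g x - ⌊2 ^ n * g x⌋₊) * (2 ^ n)⁻¹ := by
    rw [dyadicApprox]
    field_simp
  rw [hdiff, abs_mul, abs_of_nonneg (sub_nonneg.2 hle), abs_of_pos (inv_pos.2 h2n)]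
  exact mul_le_of_le_one_left (inv_pos.2 h2n).le (by linarith)

lemma tendstoUniformly_dyadicApprox {g : X → ℝ} (hg0 : 0 ≤ g) :
    TendstoUniformly (dyadicApprox g) g Filter.atTop := by
  rw [Metric.tendstoUniformly_iff]
  intro ε hε
  have h2n : Filter.Tendsto (fun n : ℕ => ((2 : ℝ) ^ n)⁻¹) Filter.atTop (nhds 0) :=
    tendsto_inv_atTop_zero.comp (tendsto_pow_atTop_atTop_of_one_lt one_lt_two)
  filter_upwards [h2n.eventually (gt_mem_nhds hε)] with n hn x
  exact (Real.dist_eq _ _).trans_le (abs_sub_dyadicApprox_le hg0 n x) |>.trans_lt hn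

lemma dyadicApprox_eq_sum {g : X → ℝ} (hg0 : 0 ≤ g) {M : ℝ} (hM : ∀ x, g x ≤ M) (n : ℕ) :
    dyadicApprox g n =
      ∑ k ∈ range ⌊2 ^ n * M⌋₊, ((2 : ℝ) ^ n)⁻¹ • ind {x | (k + 1) / 2 ^ n ≤ g x} := by
  have h2n : (0 : ℝ) < 2 ^ n := by positivity
  ext x
  have hK : ⌊2 ^ n * g x⌋₊ ≤ ⌊2 ^ n * M⌋₊ := Nat.floor_le_floor (by gcongr; exact hM x)
  have hlevel (k : ℕ) : ((k : ℝ) + 1) / 2 ^ n ≤ g x ↔ (k : ℝ) + 1 ≤ 2 ^ n * g x := by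
    rw [div_le_iff₀ h2n, mul_comm]
  simp only [Finset.sum_apply, Pi.smul_apply, smul_eq_mul, ind, Set.indicator_apply,
    Set.mem_ofPred_eq, Pi.one_apply, mul_ite, mul_one, mul_zero, hlevel]
  rw [← sum_filter, sum_const, filter_range_succ_le_eq_range_floor
    (mul_nonneg h2n.le (hg0 x)) hK, card_range, nsmul_eq_mul, dyadicApprox, div_eq_mul_inv]

theorem bMeas_of_simpleMeas_ind_superlevel {Bfam : Set (Set X)} {g : X → ℝ} (hg : IsGamble g)
    (hg0 : 0 ≤ g) (h : ∀ r : ℚ, 0 ≤ r → SimpleMeas Bfam (ind {x | (r : ℝ) ≤ g x})) :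
    BMeas Bfam g := by
  obtain ⟨M, hM⟩ := hg
  refine ⟨dyadicApprox g, fun n => ?_, tendstoUniformly_dyadicApprox hg0⟩
  have hsimple : SimpleMeas Bfam (dyadicApprox g n) := by
    rw [dyadicApprox_eq_sum hg0 (fun x => (le_abs_self _).trans (hM x)) n]
    refine SimpleMeas.sum _ fun k _ => SimpleMeas.smul ?_ (by positivity)
    simpa using h ((k + 1) / 2 ^ n) (by positivity)
  exact ⟨hsimple.nonneg, hsimple⟩

theorem stmt0_general {X : Type*} (Bfam : Set (Set X))
    (g : X → ℝ) (hg : IsGamble g) (hg0 : 0 ≤ g)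
    (h : ∀ r : ℚ, 0 ≤ r → ∃ (n : ℕ) (Bs : Fin n → Set X),
      (∀ i, Bs i ∈ Bfam ∪ {Set.univ, ∅}) ∧
      (Pairwise fun i j => Disjoint (Bs i) (Bs j)) ∧
      {x | (r : ℝ) ≤ g x} = ⋃ i, Bs i) :
    BMeas Bfam g := by
  refine bMeas_of_simpleMeas_ind_superlevel hg hg0 fun r hr => ?_
  obtain ⟨n, Bs, hB, hdisj, hlevel⟩ := h r hr
  rw [hlevel]
  exact simpleMeas_ind_iUnion hB hdisj

/-- Proposition 2: sufficient condition for `B`-measurability. -/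
theorem stmt0 {X : Type*} [Nonempty X] (Bfam : Set (Set X))
    (hBfam : ∀ A ∈ Bfam, A.Nonempty)
    (g : X → ℝ) (hg : IsGamble g) (hg0 : 0 ≤ g)
    (h : ∀ r : ℚ, 0 ≤ r → ∃ (n : ℕ) (Bs : Fin n → Set X),
      (∀ i, Bs i ∈ Bfam ∪ {Set.univ, ∅}) ∧
      (Pairwise fun i j => Disjoint (Bs i) (Bs j)) ∧
      {x | (r : ℝ) ≤ g x} = ⋃ i, Bs i) :
    BMeas Bfam g :=
  stmt0_general Bfam g hg hg0 h

end IPaper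
end

section
/- Let lp be a coherent conditional lower prevision on C ⊆ C(X), and let A_lp := { (f − μ)·1_B : (f,B) ∈ C, μ ∈ ℝ, μ < lp(f|B) } and E(lp) := E(A_lp). Then: (i) E(lp) is a coherent set of desirable gambles on X; (ii) lp_{E(lp)}(f|B) = lp(f|B) for all (f,B) ∈ C; and (iii) for every coherent set of desirable gambles D on X such that lp_D coincides with lp on C, one has E(lp) ⊆ D. -/
open scoped BigOperators

namespace IPaper

variable {X : Type*}

/-!
Any coherent `D` inducing `lp` on `C` contains `A_lp`: for `μ < lp(f|B)` the supremum defining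
`lp_D(f|B)` yields some `μ' > μ` with `(f - μ')·1_B ∈ D`, and `(f - μ)·1_B` is that gamble plus
the positive gamble `(μ' - μ)·1_B`. As `D` is a convex cone containing the positive gambles,
`E(lp) ⊆ D`. This inclusion keeps the nonpositive gambles out of `E(lp)`, so it is coherent, and
squeezes `lp_{E(lp)}` between `lp` (every `μ < lp(f|B)` is admitted by `A_lp`) and `lp_D = lp`.
-/

section Cones

variable {X : Type*}

lemma subset_posi (A : Set (X → ℝ)) : A ⊆ posi A :=
  fun f hf => ⟨0, fun _ => 1, fun _ => f, fun _ => one_pos, fun _ => hf, by simp⟩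

lemma smul_mem_posi {A : Set (X → ℝ)} {f : X → ℝ} (hf : f ∈ posi A) {c : ℝ} (hc : 0 < c) :
    c • f ∈ posi A := by
  obtain ⟨n, l, h, hl, hh, rfl⟩ := hf
  exact ⟨n, fun i => c * l i, h, fun i => mul_pos hc (hl i), hh, by
    simp only [Finset.smul_sum, mul_smul]⟩

lemma add_mem_posi {A : Set (X → ℝ)} {f g : X → ℝ} (hf : f ∈ posi A) (hg : g ∈ posi A) :
    f + g ∈ posi A := by
  obtain ⟨n, l, h, hl, hh, rfl⟩ := hf
  obtain ⟨m, l', h', hl', hh', rfl⟩ := hg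
  let e : Fin (n + m + 1 + 1) ≃ Fin (n + 1) ⊕ Fin (m + 1) :=
    (finCongr (by omega)).trans finSumFinEquiv.symm
  refine ⟨n + m + 1, Sum.elim l l' ∘ e, Sum.elim h h' ∘ e, fun i => ?_, fun i => ?_, ?_⟩
  · exact Sum.forall (p := fun j => 0 < Sum.elim l l' j) |>.mpr ⟨hl, hl'⟩ (e i)
  · exact Sum.forall (p := fun j => Sum.elim h h' j ∈ A) |>.mpr ⟨hh, hh'⟩ (e i)
  · let terms j := Sum.elim l l' j • Sum.elim h h' j
    calc ∑ i, l i • h i + ∑ i, l' i • h' i = ∑ j, terms j := (Fintype.sum_sum_type terms).symm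
      _ = ∑ i, terms (e i) := (e.sum_comp terms).symm

namespace CoherentSDG

variable {D : Set (X → ℝ)}

lemma sum_mem (hD : CoherentSDG D) {n : ℕ} (g : Fin (n + 1) → X → ℝ) (hg : ∀ i, g i ∈ D) :
    ∑ i, g i ∈ D := by
  induction n with
  | zero => simpa using hg 0
  | succ n ih =>
    rw [Fin.sum_univ_castSucc]
    exact hD.d3 _ (ih _ fun i => hg _) _ (hg _)

lemma posi_subset (hD : CoherentSDG D) {A : Set (X → ℝ)} (hA : A ⊆ D) : posi A ⊆ D := by
  rintro g ⟨n, l, h, hl, hh, rfl⟩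
  exact hD.sum_mem _ fun i => hD.d2 _ (hA (hh i)) _ (hl i)

lemma natExtSet_subset (hD : CoherentSDG D) {A : Set (X → ℝ)} (hA : A ⊆ D) :
    natExtSet A ⊆ D :=
  hD.posi_subset <| Set.union_subset hA fun f hf => hD.d1 f hf.1 hf.2.1 hf.2.2

lemma natExtSet_of_subset (hD : CoherentSDG D) {A : Set (X → ℝ)} (hA : A ⊆ D) :
    CoherentSDG (natExtSet A) where
  subset_gambles f hf := hD.subset_gambles f (hD.natExtSet_subset hA hf)
  d1 _ hf h0 hne := subset_posi _ (Or.inr ⟨hf, h0, hne⟩)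
  d2 _ hf _ hl := smul_mem_posi hf hl
  d3 _ hf _ hg := add_mem_posi hf hg
  d4 f hf hmem := hD.d4 f hf (hD.natExtSet_subset hA hmem)

end CoherentSDG

end Cones

section LowerPrevision

variable {X : Type*} {D : Set (X → ℝ)} {f : X → ℝ} {B : Set X}

lemma const_mul_ind_mem_Gpos {c : ℝ} (hc : 0 < c) (hB : B.Nonempty) :
    (fun x => c * ind B x) ∈ Gpos X := by
  have h01 : ∀ x, 0 ≤ ind B x ∧ ind B x ≤ 1 := fun x => by
    unfold ind Set.indicator; split_ifs <;> norm_num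
  obtain ⟨x₀, hx₀⟩ := hB
  refine ⟨⟨c, fun x => ?_⟩, fun x => mul_nonneg hc.le (h01 x).1, fun h => ?_⟩
  · rw [abs_mul, abs_of_pos hc, abs_of_nonneg (h01 x).1]
    exact mul_le_of_le_one_right hc.le (h01 x).2
  · have := congrFun h x₀
    simp [ind, hx₀, hc.ne'] at this

lemma lpOf_mono {D' : Set (X → ℝ)} (h : D ⊆ D') : lpOf D f B ≤ lpOf D' f B :=
  sSup_le_sSup <| Set.image_mono fun _ hm => h hm

lemma le_lpOf {a : EReal}
    (h : ∀ m : ℝ, (m : EReal) < a → (fun x => (f x - m) * ind B x) ∈ D) : a ≤ lpOf D f B :=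
  EReal.ge_of_forall_gt_iff_ge.mp fun m hm => le_sSup ⟨m, h m hm, rfl⟩

lemma CoherentSDG.sub_mul_ind_mem_of_lt_lpOf (hD : CoherentSDG D) (hB : B.Nonempty) {m : ℝ}
    (hm : (m : EReal) < lpOf D f B) : (fun x => (f x - m) * ind B x) ∈ D := by
  obtain ⟨_, ⟨m', hm'D, rfl⟩, hmm'⟩ := lt_sSup_iff.mp hm
  have hsplit : (fun x => (f x - m) * ind B x) =
      (fun x => (f x - m') * ind B x) + fun x => (m' - m) * ind B x := by
    funext x; simp only [Pi.add_apply]; ring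
  have hpos := const_mul_ind_mem_Gpos (sub_pos.mpr (EReal.coe_lt_coe_iff.mp hmm')) hB
  rw [hsplit]
  exact hD.d3 _ hm'D _ (hD.d1 _ hpos.1 hpos.2.1 hpos.2.2)

lemma Alp_subset {C : Set ((X → ℝ) × Set X)} (hC : C ⊆ domC X)
    {lp : (X → ℝ) → Set X → EReal} (hD : CoherentSDG D)
    (h : ∀ p ∈ C, lpOf D p.1 p.2 = lp p.1 p.2) : Alp C lp ⊆ D := by
  rintro g ⟨p, hp, m, hm, rfl⟩
  exact hD.sub_mul_ind_mem_of_lt_lpOf (hC hp).2 (h p hp ▸ hm)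

end LowerPrevision

theorem stmt3_general {X : Type*} (C : Set ((X → ℝ) × Set X)) (hC : C ⊆ domC X)
    (lp : (X → ℝ) → Set X → EReal) (hlp : Coherent C lp) :
    CoherentSDG (ElpSet C lp) ∧
    (∀ p ∈ C, lpOf (ElpSet C lp) p.1 p.2 = lp p.1 p.2) ∧
    (∀ D : Set (X → ℝ), CoherentSDG D → (∀ p ∈ C, lpOf D p.1 p.2 = lp p.1 p.2) →
      ElpSet C lp ⊆ D) := by
  obtain ⟨D, hD, hDlp⟩ := hlp
  have hAD : Alp C lp ⊆ D := Alp_subset hC hD fun p hp => (hDlp p hp).symm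
  refine ⟨hD.natExtSet_of_subset hAD, fun p hp => le_antisymm ?_ ?_, fun D' hD' hD'lp =>
    hD'.natExtSet_subset (Alp_subset hC hD' hD'lp)⟩
  · exact hDlp p hp ▸ lpOf_mono (hD.natExtSet_subset hAD)
  · exact le_lpOf fun m hm => subset_posi _ (Or.inl ⟨p, hp, m, hm, rfl⟩)

/-- Proposition 4: `E(lp)` is the smallest coherent set of desirable
gambles inducing `lp` on `C`. -/
theorem stmt3 {X : Type*} [Nonempty X] (C : Set ((X → ℝ) × Set X)) (hC : C ⊆ domC X)
    (lp : (X → ℝ) → Set X → EReal) (hlp : Coherent C lp) :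
    CoherentSDG (ElpSet C lp) ∧
    (∀ p ∈ C, lpOf (ElpSet C lp) p.1 p.2 = lp p.1 p.2) ∧
    (∀ D : Set (X → ℝ), CoherentSDG D → (∀ p ∈ C, lpOf D p.1 p.2 = lp p.1 p.2) →
      ElpSet C lp ⊆ D) :=
  stmt3_general C hC lp hlp

end IPaper
end

section
/- Let G ⊆ G(X) be a linear space of gambles containing the constant gamble 1. Then a lower prevision lp on G (i.e., a conditional lower prevision on { (f, X) : f ∈ G }, writing lp(f) := lp(f|X)) is coherent if and only if it is real-valued and satisfies: (LP1) lp(f) ≥ inf_{x∈X} f(x) for all f ∈ G; (LP2) lp(λf) = λ·lp(f) for all f ∈ G and λ ≥ 0; (LP3) lp(f+g) ≥ lp(f) + lp(g) for all f, g ∈ G. -/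
open scoped BigOperators

namespace IPaper

variable {X : Type*}

/-!
A coherent set of desirable gambles `D` induces the real functional
`f ↦ sup {μ | f - μ ∈ D}`, and D1–D4 translate into LP1–LP3: D1 gives the lower bound
by `inf f`, D4 the upper bound by `sup f`, D2 homogeneity and D3 superadditivity.
Conversely, a real functional `P` on `G` with LP1–LP3 satisfies
`P f ≥ P f' + inf (f - f')`, so it is recovered as the lower prevision of the coherent set
of gambles that are positive or dominate some `f - μ` with `f ∈ G` and `μ < P f`.
-/

open scoped Pointwise

namespace IsGamble

variable {f g : X → ℝ}

lemma bddBelow_range (hf : IsGamble f) : BddBelow (Set.range f) := by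
  obtain ⟨M, hM⟩ := hf
  exact ⟨-M, by rintro _ ⟨x, rfl⟩; exact (abs_le.mp (hM x)).1⟩

lemma bddAbove_range (hf : IsGamble f) : BddAbove (Set.range f) := by
  obtain ⟨M, hM⟩ := hf
  exact ⟨M, by rintro _ ⟨x, rfl⟩; exact (abs_le.mp (hM x)).2⟩

lemma sub_const (hf : IsGamble f) (c : ℝ) : IsGamble fun x => f x - c := by
  obtain ⟨M, hM⟩ := hf
  exact ⟨M + |c|, fun x => (abs_sub _ _).trans (by gcongr; exact hM x)⟩

lemma const_smul (hf : IsGamble f) (l : ℝ) : IsGamble (l • f) := by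
  obtain ⟨M, hM⟩ := hf
  exact ⟨|l| * M, fun x => by rw [Pi.smul_apply, smul_eq_mul, abs_mul]; gcongr; exact hM x⟩

lemma add (hf : IsGamble f) (hg : IsGamble g) : IsGamble (f + g) := by
  obtain ⟨M, hM⟩ := hf
  obtain ⟨N, hN⟩ := hg
  exact ⟨M + N, fun x => (abs_add_le _ _).trans (add_le_add (hM x) (hN x))⟩

end IsGamble

def buyingPrices (D : Set (X → ℝ)) (f : X → ℝ) : Set ℝ := {m | (fun x => f x - m) ∈ D}

lemma lpOf_univ_eq_coe_sSup {D : Set (X → ℝ)} {f : X → ℝ} (hne : (buyingPrices D f).Nonempty)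
    (hbdd : BddAbove (buyingPrices D f)) :
    lpOf D f Set.univ = ((sSup (buyingPrices D f) : ℝ) : EReal) := by
  have hind : ∀ m : ℝ, (fun x => (f x - m) * ind Set.univ x) = fun x => f x - m := fun m => by
    funext x
    simp [ind]
  simp only [lpOf, hind]
  exact (Monotone.map_csSup_of_continuousAt continuous_coe_real_ereal.continuousAt
    (fun _ _ => EReal.coe_le_coe) hne hbdd).symm

structure IsLowerPrevision (G : Submodule ℝ (X → ℝ)) (P : (X → ℝ) → ℝ) : Prop where
  sInf_range_le : ∀ f ∈ G, sInf (Set.range f) ≤ P f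
  map_smul : ∀ f ∈ G, ∀ l : ℝ, 0 ≤ l → P (l • f) = l * P f
  add_le_map_add : ∀ f ∈ G, ∀ g ∈ G, P f + P g ≤ P (f + g)

lemma isLowerPrevision_iff {G : Submodule ℝ (X → ℝ)} {P : (X → ℝ) → ℝ} :
    IsLowerPrevision G P ↔ (∀ f ∈ G, sInf (Set.range f) ≤ P f) ∧
      (∀ f ∈ G, ∀ l : ℝ, 0 ≤ l → P (l • f) = l * P f) ∧
      (∀ f ∈ G, ∀ g ∈ G, P f + P g ≤ P (f + g)) :=
  ⟨fun h => ⟨h.1, h.2, h.3⟩, fun ⟨h1, h2, h3⟩ => ⟨h1, h2, h3⟩⟩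

lemma isLowerPrevision_iff_of_eq_coe {G : Submodule ℝ (X → ℝ)} {Q : (X → ℝ) → EReal}
    {P : (X → ℝ) → ℝ} (hQ : ∀ f ∈ G, Q f = P f) :
    ((∀ f ∈ G, (↑(sInf (Set.range f)) : EReal) ≤ Q f) ∧
      (∀ f ∈ G, ∀ l : ℝ, 0 ≤ l → Q (l • f) = (l : EReal) * Q f) ∧
      (∀ f ∈ G, ∀ g ∈ G, Q f + Q g ≤ Q (f + g))) ↔ IsLowerPrevision G P := by
  rw [isLowerPrevision_iff]
  refine and_congr (forall₂_congr fun f hf => ?_) (and_congr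
    (forall₂_congr fun f hf => forall₂_congr fun l _ => ?_)
    (forall₂_congr fun f hf => forall₂_congr fun g hg => ?_))
  · rw [hQ f hf, EReal.coe_le_coe_iff]
  · rw [hQ _ (G.smul_mem l hf), hQ f hf, ← EReal.coe_mul, EReal.coe_eq_coe_iff]
  · rw [hQ f hf, hQ g hg, hQ _ (G.add_mem hf hg), ← EReal.coe_add, EReal.coe_le_coe_iff]

namespace CoherentSDG

variable {D : Set (X → ℝ)} {f g : X → ℝ}

lemma mem_of_forall_pos [Nonempty X] (hD : CoherentSDG D) (hg : IsGamble g)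
    (hpos : ∀ x, 0 < g x) : g ∈ D :=
  hD.d1 g hg (fun x => (hpos x).le) fun h => (hpos (Classical.arbitrary X)).ne' (congrFun h _)

lemma exists_lt_of_mem_buyingPrices (hD : CoherentSDG D) {m : ℝ} (hm : m ∈ buyingPrices D f) :
    ∃ x, m < f x := by
  by_contra! h
  exact hD.d4 _ (fun x => sub_nonpos.2 (h x)) hm

lemma Iio_sInf_range_subset_buyingPrices [Nonempty X] (hD : CoherentSDG D) (hf : IsGamble f) :
    Set.Iio (sInf (Set.range f)) ⊆ buyingPrices D f := fun m hm =>
  hD.mem_of_forall_pos (hf.sub_const m) fun x =>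
    sub_pos.2 (hm.trans_le (csInf_le hf.bddBelow_range ⟨x, rfl⟩))

lemma buyingPrices_nonempty [Nonempty X] (hD : CoherentSDG D) (hf : IsGamble f) :
    (buyingPrices D f).Nonempty :=
  Set.nonempty_Iio.mono (hD.Iio_sInf_range_subset_buyingPrices hf)

lemma bddAbove_buyingPrices (hD : CoherentSDG D) (hf : IsGamble f) :
    BddAbove (buyingPrices D f) := by
  obtain ⟨M, hM⟩ := hf.bddAbove_range
  refine ⟨M, fun m hm => ?_⟩
  obtain ⟨x, hx⟩ := hD.exists_lt_of_mem_buyingPrices hm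
  exact hx.le.trans (hM ⟨x, rfl⟩)

lemma sInf_range_le_sSup_buyingPrices [Nonempty X] (hD : CoherentSDG D) (hf : IsGamble f) :
    sInf (Set.range f) ≤ sSup (buyingPrices D f) := by
  simpa only [csSup_Iio] using csSup_le_csSup (hD.bddAbove_buyingPrices hf) Set.nonempty_Iio
    (hD.Iio_sInf_range_subset_buyingPrices hf)

lemma buyingPrices_zero [Nonempty X] (hD : CoherentSDG D) : buyingPrices D 0 = Set.Iio 0 := by
  refine Set.Subset.antisymm (fun m hm => ?_) ?_
  · obtain ⟨x, hx⟩ := hD.exists_lt_of_mem_buyingPrices hm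
    exact hx
  · simpa using hD.Iio_sInf_range_subset_buyingPrices (f := 0) ⟨0, by simp⟩

lemma smul_mem_iff (hD : CoherentSDG D) {l : ℝ} (hl : 0 < l) : l • g ∈ D ↔ g ∈ D :=
  ⟨fun h => by simpa [smul_smul, hl.ne'] using hD.d2 _ h l⁻¹ (inv_pos.2 hl),
    fun h => hD.d2 g h l hl⟩

lemma buyingPrices_smul (hD : CoherentSDG D) {l : ℝ} (hl : 0 < l) :
    buyingPrices D (l • f) = l • buyingPrices D f := by
  ext m
  have hshift : (fun x => (l • f) x - m) = l • fun x => f x - l⁻¹ • m := by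
    funext x
    simp [mul_sub, hl.ne']
  rw [Set.mem_smul_set_iff_inv_smul_mem₀ hl.ne']
  exact (congrArg (· ∈ D) hshift).to_iff.trans (hD.smul_mem_iff hl)

lemma add_buyingPrices_subset (hD : CoherentSDG D) :
    buyingPrices D f + buyingPrices D g ⊆ buyingPrices D (f + g) := by
  rintro _ ⟨m, hm, n, hn, rfl⟩
  show (fun x => (f + g) x - (m + n)) ∈ D
  convert hD.d3 _ hm _ hn using 1
  funext x
  simp only [Pi.add_apply]
  ring

theorem isLowerPrevision [Nonempty X] (hD : CoherentSDG D) {G : Submodule ℝ (X → ℝ)}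
    (hG : ∀ f ∈ G, IsGamble f) : IsLowerPrevision G fun f => sSup (buyingPrices D f) where
  sInf_range_le f hf := hD.sInf_range_le_sSup_buyingPrices (hG f hf)
  map_smul f _ l hl := by
    rcases hl.eq_or_lt with rfl | hl
    · simp [hD.buyingPrices_zero]
    · rw [hD.buyingPrices_smul hl, Real.sSup_smul_of_nonneg hl.le, smul_eq_mul]
  add_le_map_add f hf g hg := by
    have hf := hG f hf
    have hg := hG g hg
    rw [← csSup_add (hD.buyingPrices_nonempty hf) (hD.bddAbove_buyingPrices hf)
      (hD.buyingPrices_nonempty hg) (hD.bddAbove_buyingPrices hg)]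
    exact csSup_le_csSup (hD.bddAbove_buyingPrices (hf.add hg))
      ((hD.buyingPrices_nonempty hf).add (hD.buyingPrices_nonempty hg)) hD.add_buyingPrices_subset

end CoherentSDG

variable {G : Submodule ℝ (X → ℝ)} {P : (X → ℝ) → ℝ} {f g g' : X → ℝ}

namespace IsLowerPrevision

lemma map_zero (hP : IsLowerPrevision G P) : P 0 = 0 := by
  simpa using hP.map_smul 0 G.zero_mem 0 le_rfl

lemma add_le_of_le_sub [Nonempty X] (hP : IsLowerPrevision G P) {f' : X → ℝ} (hf : f ∈ G)
    (hf' : f' ∈ G) {c : ℝ} (hc : ∀ x, c ≤ f x - f' x) : P f' + c ≤ P f :=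
  calc P f' + c ≤ P f' + P (f - f') := by
        gcongr
        exact (le_csInf (Set.range_nonempty _) (by rintro _ ⟨x, rfl⟩; exact hc x)).trans
          (hP.sInf_range_le _ (G.sub_mem hf hf'))
    _ ≤ P (f' + (f - f')) := hP.add_le_map_add _ hf' _ (G.sub_mem hf hf')
    _ = P f := by rw [add_sub_cancel]

lemma le_of_forall_le [Nonempty X] (hP : IsLowerPrevision G P) (hf : f ∈ G) {c : ℝ}
    (hc : ∀ x, f x ≤ c) : P f ≤ c := by
  have := hP.add_le_of_le_sub G.zero_mem hf (c := -c) fun x => by simp [hc x]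
  linarith [hP.map_zero]

end IsLowerPrevision

def DominatesAcceptable (G : Submodule ℝ (X → ℝ)) (P : (X → ℝ) → ℝ) (g : X → ℝ) : Prop :=
  ∃ f ∈ G, ∃ m < P f, ∀ x, f x - m ≤ g x

namespace DominatesAcceptable

lemma mono (h : DominatesAcceptable G P g) (hle : g ≤ g') : DominatesAcceptable G P g' := by
  obtain ⟨f, hf, m, hm, hfg⟩ := h
  exact ⟨f, hf, m, hm, fun x => (hfg x).trans (hle x)⟩

lemma smul (hP : IsLowerPrevision G P) (h : DominatesAcceptable G P g) {l : ℝ} (hl : 0 < l) :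
    DominatesAcceptable G P (l • g) := by
  obtain ⟨f, hf, m, hm, hfg⟩ := h
  refine ⟨l • f, G.smul_mem l hf, l * m, ?_, fun x => ?_⟩
  · rw [hP.map_smul f hf l hl.le]
    exact mul_lt_mul_of_pos_left hm hl
  · simpa [mul_sub] using mul_le_mul_of_nonneg_left (hfg x) hl.le

lemma add (hP : IsLowerPrevision G P) (h : DominatesAcceptable G P g)
    (h' : DominatesAcceptable G P g') : DominatesAcceptable G P (g + g') := by
  obtain ⟨f, hf, m, hm, hfg⟩ := h
  obtain ⟨f', hf', m', hm', hfg'⟩ := h'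
  refine ⟨f + f', G.add_mem hf hf', m + m',
    (add_lt_add hm hm').trans_le (hP.add_le_map_add f hf f' hf'), fun x => ?_⟩
  simp only [Pi.add_apply]
  linarith [hfg x, hfg' x]

end DominatesAcceptable

lemma IsLowerPrevision.not_dominatesAcceptable_of_nonpos [Nonempty X]
    (hP : IsLowerPrevision G P) (hg : g ≤ 0) : ¬ DominatesAcceptable G P g := by
  rintro ⟨f, hf, m, hm, hfg⟩
  exact (hP.le_of_forall_le hf fun x => sub_nonpos.1 ((hfg x).trans (hg x))).not_gt hm

/-- By LP2 and LP3 this set is closed under positive combinations, so, unlike the natural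
extension `ElpSet`, it needs no positive hull. -/
def desirSet (G : Submodule ℝ (X → ℝ)) (P : (X → ℝ) → ℝ) : Set (X → ℝ) :=
  {g | IsGamble g ∧ (0 < g ∨ DominatesAcceptable G P g)}

lemma Iio_subset_buyingPrices_desirSet (hf : f ∈ G) (hfg : IsGamble f) :
    Set.Iio (P f) ⊆ buyingPrices (desirSet G P) f :=
  fun m hm => ⟨hfg.sub_const m, Or.inr ⟨f, hf, m, hm, fun _ => le_rfl⟩⟩

namespace IsLowerPrevision

theorem coherentSDG_desirSet [Nonempty X] (hP : IsLowerPrevision G P) :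
    CoherentSDG (desirSet G P) where
  subset_gambles _ hg := hg.1
  d1 _ hg hnn hne := ⟨hg, Or.inl (lt_of_le_of_ne hnn (Ne.symm hne))⟩
  d2 _ hg l hl := ⟨hg.1.const_smul l, hg.2.imp (smul_pos hl) (·.smul hP hl)⟩
  d3 _ hg _ hg' := by
    refine ⟨hg.1.add hg'.1, ?_⟩
    rcases hg.2, hg'.2 with ⟨hpos | hdom, hpos' | hdom'⟩
    · exact Or.inl (add_pos hpos hpos')
    · exact Or.inr (hdom'.mono (le_add_of_nonneg_left hpos.le))
    · exact Or.inr (hdom.mono (le_add_of_nonneg_right hpos'.le))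
    · exact Or.inr (hdom.add hP hdom')
  d4 _ hle hg := hg.2.elim (fun hpos => hpos.not_ge hle) (hP.not_dominatesAcceptable_of_nonpos hle)

lemma buyingPrices_desirSet_subset_Iic [Nonempty X] (hP : IsLowerPrevision G P) (hf : f ∈ G) :
    buyingPrices (desirSet G P) f ⊆ Set.Iic (P f) := by
  rintro m ⟨-, hpos | ⟨f', hf', m', hm', hle⟩⟩
  · exact (le_csInf (Set.range_nonempty f) (by
      rintro _ ⟨x, rfl⟩
      exact sub_nonneg.1 (hpos.le x))).trans (hP.sInf_range_le f hf)
  · have := hP.add_le_of_le_sub hf hf' (c := m - m') fun x => by linarith [hle x]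
    exact Set.mem_Iic.2 (by linarith)

theorem lpOf_desirSet [Nonempty X] (hP : IsLowerPrevision G P) (hf : f ∈ G)
    (hfg : IsGamble f) : lpOf (desirSet G P) f Set.univ = P f := by
  have hsub := Iio_subset_buyingPrices_desirSet (P := P) hf hfg
  have hne := Set.nonempty_Iio.mono hsub
  have hlub : IsLUB (buyingPrices (desirSet G P) f) (P f) :=
    isLUB_Iio.of_subset_of_superset isLUB_Iic hsub (hP.buyingPrices_desirSet_subset_Iic hf)
  rw [lpOf_univ_eq_coe_sSup hne hlub.bddAbove, hlub.csSup_eq hne]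

end IsLowerPrevision

theorem stmt7_general {X : Type*} [Nonempty X] (G : Submodule ℝ (X → ℝ))
    (hG : ∀ f ∈ G, IsGamble f)
    (lp : (X → ℝ) → Set X → EReal) :
    Coherent {p : (X → ℝ) × Set X | p.1 ∈ G ∧ p.2 = Set.univ} lp ↔
      ((∀ f ∈ G, ∃ r : ℝ, lp f Set.univ = (r : EReal)) ∧
        (∀ f ∈ G, (↑(sInf (Set.range f)) : EReal) ≤ lp f Set.univ) ∧
        (∀ f ∈ G, ∀ l : ℝ, 0 ≤ l → lp (l • f) Set.univ = (l : EReal) * lp f Set.univ) ∧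
        (∀ f ∈ G, ∀ g ∈ G, lp f Set.univ + lp g Set.univ ≤ lp (f + g) Set.univ)) := by
  constructor
  · rintro ⟨D, hD, hlp⟩
    have hP : ∀ f ∈ G, lp f Set.univ = ((sSup (buyingPrices D f) : ℝ) : EReal) := fun f hf =>
      (hlp (f, Set.univ) ⟨hf, rfl⟩).trans (lpOf_univ_eq_coe_sSup
        (hD.buyingPrices_nonempty (hG f hf)) (hD.bddAbove_buyingPrices (hG f hf)))
    exact ⟨fun f hf => ⟨_, hP f hf⟩,
      (isLowerPrevision_iff_of_eq_coe (Q := fun f => lp f Set.univ) hP).2 (hD.isLowerPrevision hG)⟩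
  · rintro ⟨hreal, hLP⟩
    have hP : ∀ f ∈ G, lp f Set.univ = ((lp f Set.univ).toReal : EReal) := fun f hf => by
      obtain ⟨r, hr⟩ := hreal f hf
      rw [hr, EReal.toReal_coe]
    have hlow := (isLowerPrevision_iff_of_eq_coe (Q := fun f => lp f Set.univ)
      (P := fun f => (lp f Set.univ).toReal) hP).1 hLP
    refine ⟨desirSet G _, hlow.coherentSDG_desirSet, ?_⟩
    rintro ⟨f, B⟩ ⟨hf, rfl : B = Set.univ⟩
    exact (hP f hf).trans (hlow.lpOf_desirSet hf (hG f hf)).symm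

/-- Corollary 5: an unconditional lower prevision on a linear space of
gambles containing the constant gamble 1 is coherent iff it is real-valued and
satisfies LP1–LP3. -/
theorem stmt7 {X : Type*} [Nonempty X] (G : Submodule ℝ (X → ℝ))
    (hG : ∀ f ∈ G, IsGamble f) (h1 : (fun _ : X => (1 : ℝ)) ∈ G)
    (lp : (X → ℝ) → Set X → EReal) :
    Coherent {p : (X → ℝ) × Set X | p.1 ∈ G ∧ p.2 = Set.univ} lp ↔
      ((∀ f ∈ G, ∃ r : ℝ, lp f Set.univ = (r : EReal)) ∧
        (∀ f ∈ G, (↑(sInf (Set.range f)) : EReal) ≤ lp f Set.univ) ∧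
        (∀ f ∈ G, ∀ l : ℝ, 0 ≤ l → lp (l • f) Set.univ = (l : EReal) * lp f Set.univ) ∧
        (∀ f ∈ G, ∀ g ∈ G, lp f Set.univ + lp g Set.univ ≤ lp (f + g) Set.univ)) :=
  stmt7_general G hG lp

end IPaper
end
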